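/- Let G be a connected graph, X a minimum vertex cover of G, and ℓ, d integers. Suppose some vertex x° ∈ X is adjacent to a pendant (degree-one) vertex. If there exist X_s ⊆ X and Y_s ⊆ V(G)\X with (i) (X\X_s) ∪ Y_s a vertex cover of G, (ii) rank((X\X_s) ∪ Y_s) ≥ ℓ, and (iii) |Y_s| − |X_s| ≤ ℓ − d, then there exist X'_s ⊆ X and Y'_s ⊆ V(G)\X satisfying the same three conditions with x° ∉ X'_s. -/

import Mathlib

open SimpleGraph

/-- A set of vertices is a vertex cover if it meets every edge. -/
def IsVertexCover {V : Type*} (G : SimpleGraph V) (C : Set V) : Prop :=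
  ∀ ⦃u v : V⦄, G.Adj u v → u ∈ C ∨ v ∈ C

/-- The minimum vertex cover number of a graph. -/
noncomputable def vc {V : Type*} (G : SimpleGraph V) : ℕ :=
  sInf {n | ∃ C : Set V, _root_.IsVertexCover G C ∧ C.Finite ∧ Nat.card C = n}

/-- `X` is a minimum vertex cover of `G`. -/
def IsMinVertexCover {V : Type*} (G : SimpleGraph V) (X : Set V) : Prop :=
  _root_.IsVertexCover G X ∧ ∀ C : Set V, _root_.IsVertexCover G C → Nat.card X ≤ Nat.card C

/-- The rank of a graph: number of vertices minus number of connected components. -/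
noncomputable def grank {V : Type*} (G : SimpleGraph V) : ℕ :=
  Nat.card V - Nat.card G.ConnectedComponent

/-- The rank of a set of vertices: the rank of the induced subgraph. -/
noncomputable def srank {V : Type*} (G : SimpleGraph V) (S : Set V) : ℕ :=
  grank (G.induce S)

/-- The set of endpoints of a set of edges. -/
def edgeVerts {V : Type*} (F : Set (Sym2 V)) : Set V := {v | ∃ e ∈ F, v ∈ e}

/-- The setoid identifying the vertices connected through edges of `F`. -/
def contractSetoid {V : Type*} (F : Set (Sym2 V)) : Setoid V :=
  (SimpleGraph.fromEdgeSet F).reachableSetoid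

/-- The graph obtained from `G` by contracting all the edges in `F`. -/
def contract {V : Type*} (G : SimpleGraph V) (F : Set (Sym2 V)) :
    SimpleGraph (Quotient (contractSetoid F)) where
  Adj a b := a ≠ b ∧ ∃ u v : V, Quotient.mk (contractSetoid F) u = a ∧
    Quotient.mk (contractSetoid F) v = b ∧ G.Adj u v
  symm := by
    constructor
    rintro a b ⟨hab, u, v, hu, hv, h⟩
    exact ⟨hab.symm, v, u, hv, hu, h.symm⟩
  loopless := by constructor; rintro a ⟨h, -⟩; exact h rfl

/-! If `x° ∉ X_s` there is nothing to do. Otherwise the pendant neighbour `y°` lies outside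
the minimum cover `X`, so it lies in `Y_s` to cover the edge `x°y°`. Exchanging `y°` for `x°`
keeps a vertex cover (`x°` covers the only edge at `y°`), keeps both `|Y_s| - |X_s|` and the
order of the set, and cannot lower the rank, because `y°` is isolated in `(X \ X_s) ∪ Y_s`. -/

lemma SimpleGraph.ConnectedComponent.map_surjective {V W : Type*} {G : SimpleGraph V}
    {H : SimpleGraph W} {f : G →g H} (hf : Function.Surjective f) :
    Function.Surjective (ConnectedComponent.map f) := by
  intro c
  induction c using ConnectedComponent.ind with
  | _ w =>
    obtain ⟨v, rfl⟩ := hf w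
    exact ⟨G.connectedComponentMk v, rfl⟩

lemma grank_le_grank_of_surjective {V W : Type*} [Finite V] {G : SimpleGraph V}
    {H : SimpleGraph W} (f : G →g H) (hf : Function.Surjective f)
    (hcard : Nat.card V = Nat.card W) : grank G ≤ grank H := by
  have := Nat.card_le_card_of_surjective _ (ConnectedComponent.map_surjective hf)
  unfold grank
  omega

/-- Sending `y` to `x` and fixing the rest of `S` is a surjective homomorphism between
induced subgraphs of the same order. -/
lemma srank_le_srank_exchange {V : Type*} [Finite V] (G : SimpleGraph V) {S : Set V} {x y : V}
    (hy : y ∈ S) (hx : x ∉ S) (hiso : ∀ z ∈ S, ¬ G.Adj y z) :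
    srank G S ≤ srank G (insert x (S \ {y})) := by
  classical
  set T : Set V := insert x (S \ {y})
  let f : S → T := fun w =>
    if h : (w : V) = y then ⟨x, Set.mem_insert x _⟩ else ⟨w, Or.inr ⟨w.2, h⟩⟩
  have hf_of_ne : ∀ w : S, (w : V) ≠ y → (f w : V) = w := fun w h => by simp [f, h]
  let φ : G.induce S →g G.induce T :=
    { toFun := f
      map_rel' := fun {a b} (hab : G.Adj a b) => by
        have ha : (a : V) ≠ y := fun h => hiso b b.2 (h ▸ hab)
        have hb : (b : V) ≠ y := fun h => hiso a a.2 (h ▸ hab.symm)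
        change G.Adj (f a) (f b)
        rwa [hf_of_ne a ha, hf_of_ne b hb] }
  have hφ : Function.Surjective φ := by
    rintro ⟨t, rfl | ⟨htS, hty⟩⟩
    · exact ⟨⟨y, hy⟩, show f ⟨y, hy⟩ = _ by simp [f]⟩
    · exact ⟨⟨t, htS⟩, Subtype.ext (hf_of_ne ⟨t, htS⟩ hty)⟩
  refine grank_le_grank_of_surjective φ hφ ?_
  simp only [Nat.card_coe_set_eq, T, Set.ncard_exchange hx hy]

lemma IsVertexCover.exchange_pendant {V : Type*} {G : SimpleGraph V} {C : Set V} {x y : V}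
    (hC : _root_.IsVertexCover G C) (hpend : ∀ z, G.Adj y z → z = x) :
    _root_.IsVertexCover G (insert x (C \ {y})) := by
  have key : ∀ u v, G.Adj u v → u ∈ C → u ∈ insert x (C \ {y}) ∨ v ∈ insert x (C \ {y}) :=
    fun u v huv hu => by
      by_cases huy : u = y
      · subst huy
        exact Or.inr (hpend v huv ▸ Set.mem_insert _ _)
      · exact Or.inl (Or.inr ⟨hu, huy⟩)
  intro u v huv
  rcases hC huv with hu | hv
  · exact key u v huv hu
  · exact (key v u huv.symm hv).symm

lemma IsMinVertexCover.pendant_notMem {V : Type*} [Finite V] {G : SimpleGraph V} {X : Set V}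
    {x y : V} (hX : IsMinVertexCover G X) (hx : x ∈ X) (hxy : G.Adj x y)
    (hpend : ∀ z, G.Adj y z → z = x) : y ∉ X := by
  intro hy
  have hcover : _root_.IsVertexCover G (X \ {y}) := by
    simpa [Set.insert_eq_of_mem (show x ∈ X \ {y} from ⟨hx, hxy.ne⟩)]
      using hX.1.exchange_pendant hpend
  have := hX.2 _ hcover
  rw [Nat.card_coe_set_eq, Nat.card_coe_set_eq] at this
  exact (Set.ncard_sdiff_singleton_lt_of_mem hy).not_ge this

theorem stmt10_general {V : Type*} [Fintype V] (G : SimpleGraph V)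
    (X : Set V) (hX : IsMinVertexCover G X) (l d : ℕ)
    (x0 : V) (hx0 : x0 ∈ X)
    (hpend : ∃ y : V, G.Adj x0 y ∧ ∀ z : V, G.Adj y z → z = x0)
    (Xs : Set V) (hXs : Xs ⊆ X) (Ys : Set V) (hYs : Ys ⊆ (Xᶜ : Set V))
    (h1 : _root_.IsVertexCover G ((X \ Xs) ∪ Ys))
    (h2 : l ≤ srank G ((X \ Xs) ∪ Ys))
    (h3 : (Nat.card Ys : ℤ) - (Nat.card Xs : ℤ) ≤ (l : ℤ) - (d : ℤ)) :
    ∃ Xs' ⊆ X, ∃ Ys' ⊆ (Xᶜ : Set V),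
      _root_.IsVertexCover G ((X \ Xs') ∪ Ys') ∧
      l ≤ srank G ((X \ Xs') ∪ Ys') ∧
      (Nat.card Ys' : ℤ) - (Nat.card Xs' : ℤ) ≤ (l : ℤ) - (d : ℤ) ∧
      x0 ∉ Xs' := by
  by_cases hx0Xs : x0 ∈ Xs
  case neg => exact ⟨Xs, hXs, Ys, hYs, h1, h2, h3, hx0Xs⟩
  obtain ⟨y, hx0y, hy⟩ := hpend
  have hyX : y ∉ X := hX.pendant_notMem hx0 hx0y hy
  set S := (X \ Xs) ∪ Ys
  have hx0S : x0 ∉ S := by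
    rintro (⟨-, h⟩ | h)
    exacts [h hx0Xs, hYs h hx0]
  have hyS : y ∈ S := (h1 hx0y).resolve_left hx0S
  have hyYs : y ∈ Ys := hyS.resolve_left fun h => hyX h.1
  have hexchange : (X \ (Xs \ {x0})) ∪ (Ys \ {y}) = insert x0 (S \ {y}) := by
    ext v
    by_cases hv : v = x0
    · subst hv; simp [hx0, hx0y.ne]
    · by_cases hvy : v = y <;> simp [S, hv, hvy, hyX, hx0y.ne']
  refine ⟨Xs \ {x0}, Set.sdiff_subset.trans hXs, Ys \ {y}, Set.sdiff_subset.trans hYs,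
    hexchange ▸ h1.exchange_pendant hy,
    hexchange ▸ h2.trans (srank_le_srank_exchange G hyS hx0S fun z hz h => hx0S (hy z h ▸ hz)),
    ?_, fun h => h.2 rfl⟩
  simp only [Nat.card_coe_set_eq] at h3 ⊢
  have hYs_card := Set.ncard_sdiff_singleton_add_one hyYs
  have hXs_card := Set.ncard_sdiff_singleton_add_one hx0Xs
  omega

theorem stmt10 {V : Type*} [Fintype V] (G : SimpleGraph V) (hconn : G.Connected)
    (X : Set V) (hX : IsMinVertexCover G X) (l d : ℕ)
    (x0 : V) (hx0 : x0 ∈ X)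
    (hpend : ∃ y : V, G.Adj x0 y ∧ ∀ z : V, G.Adj y z → z = x0)
    (Xs : Set V) (hXs : Xs ⊆ X) (Ys : Set V) (hYs : Ys ⊆ (Xᶜ : Set V))
    (h1 : _root_.IsVertexCover G ((X \ Xs) ∪ Ys))
    (h2 : l ≤ srank G ((X \ Xs) ∪ Ys))
    (h3 : (Nat.card Ys : ℤ) - (Nat.card Xs : ℤ) ≤ (l : ℤ) - (d : ℤ)) :
    ∃ Xs' ⊆ X, ∃ Ys' ⊆ (Xᶜ : Set V),
      _root_.IsVertexCover G ((X \ Xs') ∪ Ys') ∧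
      l ≤ srank G ((X \ Xs') ∪ Ys') ∧
      (Nat.card Ys' : ℤ) - (Nat.card Xs' : ℤ) ≤ (l : ℤ) - (d : ℤ) ∧
      x0 ∉ Xs' :=
  stmt10_general G X hX l d x0 hx0 hpend Xs hXs Ys hYs h1 h2 h3
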